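/- For all integers k ≥ 0 and d ≥ k − 1, ∑_{i=0}^{d} A(d+1,i) · (2i − d)^k = (d+1)! · k! · 2^k · g_k, where g_k is the coefficient of z^k in the formal power series G(z)^{d+2}, with G(z) = ∑_{t≥0} z^{2t}/(4^t · (2t+1)!). (Equivalently, for d ≥ k−1 the k-th central moment of the number of descents of a uniformly random permutation of {1,...,d+1} equals k! times the coefficient of z^k in ((e^{z/2} − e^{−z/2})/z)^{d+2}.) -/

import Mathlib

open Finset

/-- The number of descents of a permutation of `Fin n`. -/
def descentCount {n : ℕ} (σ : Equiv.Perm (Fin n)) : ℕ :=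
  (Finset.univ.filter fun i : Fin n =>
    ∃ h : (i : ℕ) + 1 < n, σ ⟨(i : ℕ) + 1, h⟩ < σ i).card

/-- The Eulerian number `A(n,k)`: the number of permutations of `{1,…,n}` with
exactly `k` descents. -/
def eulerian (n k : ℕ) : ℕ :=
  (Finset.univ.filter fun σ : Equiv.Perm (Fin n) => descentCount σ = k).card

/-!
Let `Φ_d(z) = ∑_σ e^{(des σ - d/2) z}`, summed over the permutations of `d + 1` letters, so that
the left-hand side is `2^k k!` times the coefficient of `z^k` in `Φ_d`. Inserting a new smallest
letter into a permutation with `m` descents on `n` letters raises the descent count in exactly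
`n - m` of the `n + 1` slots; this is the Eulerian recurrence, and it turns into the differential
equation `Φ_{d+1} = (d + 2) cosh(z/2) Φ_d - 2 sinh(z/2) Φ_d'`. As `2 sinh(z/2) = z G` and
`cosh(z/2) = (z G)' = G + z G'`, writing `Φ_d = (d + 1)! G^{d+2} + z^{d+2} Ψ` the recurrence gives
`Φ_{d+1} = (d + 2)! G^{d+3} + z^{d+3} ((d + 2) G' Ψ - G Ψ')`, so by induction
`Φ_d ≡ (d + 1)! G^{d+2} mod z^{d+2}`, which is the claim for `k ≤ d + 1`.
-/

namespace Word

def insertAt (p v : ℕ) (u : ℕ → ℕ) (j : ℕ) : ℕ :=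
  if j < p then u j else if j = p then v else u (j - 1)

lemma insertAt_of_lt {p v : ℕ} {u : ℕ → ℕ} {j : ℕ} (h : j < p) : insertAt p v u j = u j :=
  if_pos h

lemma insertAt_self (p v : ℕ) (u : ℕ → ℕ) : insertAt p v u p = v := by
  simp [insertAt]

lemma insertAt_of_gt {p v : ℕ} {u : ℕ → ℕ} {j : ℕ} (h : p < j) :
    insertAt p v u j = u (j - 1) := by
  simp [insertAt, h.not_gt, h.ne']

-- A descent between positions `j - 1` and `j` is recorded at `j`.
def descentSet (n : ℕ) (u : ℕ → ℕ) : Finset ℕ :=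
  {j ∈ range n | 0 < j ∧ u j < u (j - 1)}

lemma mem_descentSet {n : ℕ} {u : ℕ → ℕ} {j : ℕ} :
    j ∈ descentSet n u ↔ j < n ∧ 0 < j ∧ u j < u (j - 1) := by
  simp [descentSet]

lemma descentSet_subset_Ioo (n : ℕ) (u : ℕ → ℕ) : descentSet n u ⊆ Ioo 0 n := by
  intro j hj
  rw [mem_descentSet] at hj
  simp [hj.1, hj.2.1]

lemma card_descentSet_le (n : ℕ) (u : ℕ → ℕ) : #(descentSet n u) ≤ n - 1 :=
  (card_le_card (descentSet_subset_Ioo n u)).trans_eq (Nat.card_Ioo 0 n)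

lemma descentSet_congr {n : ℕ} {u u' : ℕ → ℕ} (h : ∀ j < n, u j = u' j) :
    descentSet n u = descentSet n u' :=
  filter_congr fun j hj => by
    rw [mem_range] at hj
    rw [h j hj, h (j - 1) (by omega)]

lemma descentSet_add_one (n : ℕ) (u : ℕ → ℕ) :
    descentSet n (fun j => u j + 1) = descentSet n u := by
  simp only [descentSet, add_lt_add_iff_right]

lemma card_descentSet_succ (n : ℕ) (u : ℕ → ℕ) :
    #(descentSet (n + 1) u) = #(descentSet n u) + if 0 < n ∧ u n < u (n - 1) then 1 else 0 := by
  rw [descentSet, range_add_one, filter_insert]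
  split_ifs
  · exact card_insert_of_notMem (by simp)
  · rfl

/-- Inserting a letter smaller than all others at position `p` creates a descent at `p`
(unless `p = 0`) and destroys the descent that may have ended at `p`. -/
lemma card_descentSet_insertAt {n p v : ℕ} {u : ℕ → ℕ} (hp : p ≤ n) (hv : ∀ j < n, v < u j) :
    #(descentSet (n + 1) (insertAt p v u)) + (if p ∈ descentSet n u then 1 else 0)
      = #(descentSet n u) + if 0 < p then 1 else 0 := by
  induction n, hp using Nat.le_induction with
  | base =>
    rw [card_descentSet_succ p, descentSet_congr (u' := u) fun j => insertAt_of_lt, insertAt_self]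
    rcases Nat.eq_zero_or_pos p with rfl | hp
    · simp [mem_descentSet]
    · rw [insertAt_of_lt (by omega : p - 1 < p)]
      simp [mem_descentSet, hp, hv (p - 1) (by omega)]
  | succ n hpn ih =>
    have ih' := ih fun j hj => hv j (by omega)
    rw [card_descentSet_succ (n + 1) (insertAt p v u), insertAt_of_gt (by omega : p < n + 1),
      Nat.add_sub_cancel, card_descentSet_succ n u]
    simp only [mem_descentSet] at ih' ⊢
    rcases hpn.eq_or_lt with rfl | hlt
    · have := hv p (by omega)
      rw [insertAt_self]
      split_ifs at ih' ⊢ <;> omega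
    · have := hv n (by omega)
      rw [insertAt_of_gt hlt]
      split_ifs at ih' ⊢ <;> omega

-- The slots where inserting a new smallest letter increases the number of descents.
def risingSlots (n : ℕ) (u : ℕ → ℕ) : Finset ℕ :=
  Ioc 0 n \ descentSet n u

lemma card_risingSlots (n : ℕ) (u : ℕ → ℕ) : #(risingSlots n u) = n - #(descentSet n u) := by
  rw [risingSlots, card_sdiff_of_subset ((descentSet_subset_Ioo n u).trans Ioo_subset_Ioc_self),
    Nat.card_Ioc, Nat.sub_zero]

lemma risingSlots_subset_range (n : ℕ) (u : ℕ → ℕ) : risingSlots n u ⊆ range (n + 1) :=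
  fun p hp => by
    simp only [risingSlots, mem_sdiff, mem_Ioc] at hp
    simp [hp.1.2]

lemma card_descentSet_insertAt_eq {n p v : ℕ} {u : ℕ → ℕ} (hp : p ≤ n) (hv : ∀ j < n, v < u j) :
    #(descentSet (n + 1) (insertAt p v u))
      = #(descentSet n u) + if p ∈ risingSlots n u then 1 else 0 := by
  have h := card_descentSet_insertAt hp hv
  have hpos : p ∈ descentSet n u → 0 < p := fun h => (mem_descentSet.mp h).2.1
  simp only [risingSlots, mem_sdiff, mem_Ioc] at h ⊢
  split_ifs at h ⊢ <;> grind

lemma sum_range_card_descentSet_insertAt {M : Type*} [AddCommMonoid M] (f : ℕ → M)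
    {n v : ℕ} {u : ℕ → ℕ} (hv : ∀ j < n, v < u j) :
    ∑ p ∈ range (n + 1), f #(descentSet (n + 1) (insertAt p v u))
      = (#(descentSet n u) + 1) • f #(descentSet n u)
        + (n - #(descentSet n u)) • f (#(descentSet n u) + 1) := by
  have hR := risingSlots_subset_range n u
  have hslot : ∀ p ∈ range (n + 1), #(descentSet (n + 1) (insertAt p v u))
      = #(descentSet n u) + if p ∈ risingSlots n u then 1 else 0 := fun p hp =>
    card_descentSet_insertAt_eq (Nat.lt_succ_iff.mp (mem_range.mp hp)) hv
  have hstay : ∀ p ∈ range (n + 1) \ risingSlots n u,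
      f #(descentSet (n + 1) (insertAt p v u)) = f #(descentSet n u) := fun p hp => by
    rw [hslot p (mem_sdiff.1 hp).1, if_neg (mem_sdiff.1 hp).2, add_zero]
  have hrise : ∀ p ∈ risingSlots n u,
      f #(descentSet (n + 1) (insertAt p v u)) = f (#(descentSet n u) + 1) := fun p hp => by
    rw [hslot p (hR hp), if_pos hp]
  have hd : #(descentSet n u) ≤ n := (card_descentSet_le n u).trans (Nat.sub_le n 1)
  rw [← sum_sdiff hR, sum_congr rfl hstay, sum_congr rfl hrise, sum_const, sum_const,
    card_sdiff_of_subset hR, card_risingSlots, card_range, show n + 1 - (n - #(descentSet n u))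
      = #(descentSet n u) + 1 by omega]

end Word

section Permutations
open Equiv

variable {n : ℕ}

def permVal (σ : Perm (Fin n)) (j : ℕ) : ℕ :=
  if h : j < n then σ ⟨j, h⟩ else 0

lemma permVal_of_lt (σ : Perm (Fin n)) {j : ℕ} (h : j < n) : permVal σ j = σ ⟨j, h⟩ :=
  dif_pos h

lemma descentCount_eq_card_descentSet (σ : Perm (Fin n)) :
    descentCount σ = #(Word.descentSet n (permVal σ)) := by
  refine card_bij (fun i _ => (i : ℕ) + 1) ?_ ?_ ?_
  · intro i hi
    obtain ⟨h, hlt⟩ := (mem_filter.mp hi).2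
    rw [Word.mem_descentSet, permVal_of_lt σ h, Nat.add_sub_cancel, permVal_of_lt σ i.isLt]
    exact ⟨h, Nat.succ_pos _, hlt⟩
  · intro a _ b _ h
    exact Fin.ext (Nat.succ_injective h)
  · intro j hj
    obtain ⟨hjn, hj0, hlt⟩ := Word.mem_descentSet.mp hj
    rw [permVal_of_lt σ hjn, permVal_of_lt σ (by omega)] at hlt
    refine ⟨⟨j - 1, by omega⟩, mem_filter.mpr ⟨mem_univ _, show j - 1 + 1 < n by omega, ?_⟩,
      show j - 1 + 1 = j by omega⟩
    simpa [Nat.sub_add_cancel hj0] using hlt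

def insertMin (σ : Perm (Fin n)) (p : Fin (n + 1)) : Perm (Fin (n + 1)) :=
  Perm.decomposeFin.symm (0, σ) * p.cycleRange

lemma insertMin_apply_self (σ : Perm (Fin n)) (p : Fin (n + 1)) : insertMin σ p p = 0 := by
  simp [insertMin, Perm.decomposeFin_symm_apply_zero]

lemma insertMin_apply_succAbove (σ : Perm (Fin n)) (p : Fin (n + 1)) (i : Fin n) :
    insertMin σ p (p.succAbove i) = (σ i).succ := by
  simp [insertMin, Fin.cycleRange_succAbove, Perm.decomposeFin_symm_apply_succ]

lemma permVal_insertMin (σ : Perm (Fin n)) (p : Fin (n + 1)) {j : ℕ} (hj : j < n + 1) :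
    permVal (insertMin σ p) j = Word.insertAt p 0 (fun j => permVal σ j + 1) j := by
  rw [permVal_of_lt _ hj]
  rcases lt_trichotomy j p with hlt | rfl | hgt
  · have : (⟨j, hj⟩ : Fin (n + 1)) = p.succAbove ⟨j, by omega⟩ :=
      (Fin.succAbove_of_castSucc_lt p ⟨j, by omega⟩ hlt).symm
    rw [this, insertMin_apply_succAbove, Word.insertAt_of_lt hlt, permVal_of_lt σ (by omega)]
    rfl
  · rw [Fin.eta, insertMin_apply_self, Word.insertAt_self, Fin.val_zero]
  · have : (⟨j, hj⟩ : Fin (n + 1)) = p.succAbove ⟨j - 1, by omega⟩ := by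
      rw [Fin.succAbove_of_le_castSucc _ _ (Fin.le_def.mpr (show (p : ℕ) ≤ j - 1 by omega))]
      exact Fin.ext (show j = j - 1 + 1 by omega)
    rw [this, insertMin_apply_succAbove, Word.insertAt_of_gt hgt, permVal_of_lt σ (by omega)]
    rfl

lemma descentCount_insertMin (σ : Perm (Fin n)) (p : Fin (n + 1)) :
    descentCount (insertMin σ p)
      = #(Word.descentSet (n + 1) (Word.insertAt p 0 (fun j => permVal σ j + 1))) := by
  rw [descentCount_eq_card_descentSet,
    Word.descentSet_congr fun j hj => permVal_insertMin σ p hj]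

lemma insertMin_bijective :
    Function.Bijective fun x : Perm (Fin n) × Fin (n + 1) => insertMin x.1 x.2 := by
  refine (Fintype.bijective_iff_injective_and_card _).mpr ⟨?_, ?_⟩
  · rintro ⟨σ, p⟩ ⟨σ', p'⟩ h
    dsimp only at h
    have hp : p = p' := (insertMin σ' p').injective <| by
      rw [insertMin_apply_self, ← h, insertMin_apply_self]
    subst hp
    obtain rfl : σ = σ' :=
      congrArg Prod.snd (Perm.decomposeFin.symm.injective (mul_right_cancel h))
    rfl
  · simp [Fintype.card_perm, Nat.factorial_succ, mul_comm]

lemma sum_descentCount_insertMin {M : Type*} [AddCommMonoid M] (f : ℕ → M) (σ : Perm (Fin n)) :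
    ∑ p : Fin (n + 1), f (descentCount (insertMin σ p))
      = (descentCount σ + 1) • f (descentCount σ)
        + (n - descentCount σ) • f (descentCount σ + 1) := by
  simp only [descentCount_insertMin]
  rw [Fin.sum_univ_eq_sum_range (fun p => f #(Word.descentSet (n + 1)
      (Word.insertAt p 0 (fun j => permVal σ j + 1)))),
    Word.sum_range_card_descentSet_insertAt f fun j _ => Nat.succ_pos _,
    Word.descentSet_add_one, descentCount_eq_card_descentSet]

lemma descentCount_lt (σ : Perm (Fin (n + 1))) : descentCount σ < n + 1 := by
  have := Word.card_descentSet_le (n + 1) (permVal σ)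
  rw [descentCount_eq_card_descentSet]
  omega

lemma sum_descentCount_eq_sum_eulerian {M : Type*} [AddCommMonoid M] (f : ℕ → M) :
    ∑ σ : Perm (Fin (n + 1)), f (descentCount σ)
      = ∑ i ∈ range (n + 1), eulerian (n + 1) i • f i := by
  rw [← sum_fiberwise_of_maps_to (g := descentCount) fun σ _ => mem_range.mpr (descentCount_lt σ)]
  refine sum_congr rfl fun i _ => ?_
  rw [sum_congr rfl fun σ hσ => congrArg f (mem_filter.mp hσ).2, sum_const]
  rfl

/-- The recurrence `A(n+2, i) = (i+1) A(n+1, i) + (n+2-i) A(n+1, i-1)`, in summed form. -/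
lemma sum_eulerian_succ {M : Type*} [AddCommMonoid M] (f : ℕ → M) :
    ∑ i ∈ range (n + 2), eulerian (n + 2) i • f i
      = ∑ i ∈ range (n + 1), eulerian (n + 1) i • ((i + 1) • f i + (n + 1 - i) • f (i + 1)) := by
  rw [← sum_descentCount_eq_sum_eulerian,
    ← sum_descentCount_eq_sum_eulerian fun i => (i + 1) • f i + (n + 1 - i) • f (i + 1),
    ← Fintype.sum_bijective _ insertMin_bijective (fun x => f (descentCount (insertMin x.1 x.2)))
      _ fun _ => rfl, Fintype.sum_prod_type]
  exact sum_congr rfl fun σ _ => sum_descentCount_insertMin f σ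

end Permutations

namespace PowerSeries

lemma derivative_rescale {R : Type*} [CommSemiring R] (f : R⟦X⟧) (a : R) :
    d⁄dX R (rescale a f) = a • rescale a (d⁄dX R f) := by
  ext n
  simp only [coeff_derivative, coeff_rescale, coeff_smul, smul_eq_mul]
  ring

lemma derivative_rescale_exp {A : Type*} [CommRing A] [Algebra ℚ A] (a : A) :
    d⁄dX A (rescale a (exp A)) = a • rescale a (exp A) := by
  rw [derivative_rescale, derivative_exp]

end PowerSeries

open PowerSeries

noncomputable def sinhcHalf : ℚ⟦X⟧ :=
  mk fun n => if Even n then (1 : ℚ) / (4 ^ (n / 2) * (Nat.factorial (n + 1) : ℚ)) else 0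

lemma X_mul_sinhcHalf :
    X * sinhcHalf = rescale (1 / 2 : ℚ) (exp ℚ) - rescale (-1 / 2 : ℚ) (exp ℚ) := by
  ext n
  rcases n with _ | m
  · simp only [coeff_zero_X_mul, map_sub, coeff_rescale, pow_zero, one_mul, sub_self]
  rw [coeff_succ_X_mul, sinhcHalf, coeff_mk, map_sub, coeff_rescale, coeff_rescale, coeff_exp,
    neg_div, neg_pow]
  rcases Nat.even_or_odd m with ⟨t, rfl⟩ | ⟨t, rfl⟩
  · rw [if_pos ⟨t, rfl⟩, show (t + t) / 2 = t by omega, Odd.neg_one_pow ⟨t, by ring⟩,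
      show (4 : ℚ) ^ t = 2 ^ (t + t) by rw [← two_mul, pow_mul]; norm_num]
    rw [Algebra.algebraMap_self, RingHom.id_apply, Nat.factorial_succ, one_div_pow]
    push_cast
    field_simp
    ring
  · rw [if_neg (Nat.not_even_iff_odd.mpr ⟨t, rfl⟩), Even.neg_one_pow ⟨t + 1, by ring⟩]
    ring

lemma sinhcHalf_add_X_mul_derivative :
    sinhcHalf + X * d⁄dX ℚ sinhcHalf
      = (1 / 2 : ℚ) • (rescale (1 / 2 : ℚ) (exp ℚ) + rescale (-1 / 2 : ℚ) (exp ℚ)) := by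
  have h := congrArg (d⁄dX ℚ) X_mul_sinhcHalf
  rw [Derivation.leibniz, derivative_X, map_sub, derivative_rescale_exp,
    derivative_rescale_exp, smul_eq_mul, smul_eq_mul, mul_one] at h
  rw [add_comm, h]
  module

-- `Φ_d`, with the permutations grouped by their number of descents.
noncomputable def descentMomentSeries (d : ℕ) : ℚ⟦X⟧ :=
  ∑ i ∈ range (d + 1), (eulerian (d + 1) i : ℚ) • rescale ((2 * i - d) / 2 : ℚ) (exp ℚ)

lemma eulerian_one_zero : eulerian 1 0 = 1 := by
  rw [eulerian, filter_true_of_mem fun σ _ => Nat.lt_one_iff.mp (descentCount_lt σ), card_univ,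
    Fintype.card_perm, Fintype.card_fin, Nat.factorial_one]

lemma descentMomentSeries_zero : descentMomentSeries 0 = 1 := by
  simp [descentMomentSeries, eulerian_one_zero]

lemma descentMomentSeries_succ (d : ℕ) :
    descentMomentSeries (d + 1)
      = ((d : ℚ) + 2) • ((sinhcHalf + X * d⁄dX ℚ sinhcHalf) * descentMomentSeries d)
        - X * sinhcHalf * d⁄dX ℚ (descentMomentSeries d) := by
  simp only [descentMomentSeries, Nat.cast_smul_eq_nsmul]
  rw [sum_eulerian_succ, mul_sum, smul_sum, map_sum, mul_sum, ← sum_sub_distrib]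
  refine sum_congr rfl fun i hi => ?_
  have hid : i ≤ d := Nat.lt_succ_iff.mp (mem_range.mp hi)
  rw [map_nsmul, derivative_rescale_exp, mul_smul_comm, smul_comm, mul_smul_comm, ← smul_sub]
  congr 1
  set c : ℚ := (2 * i - d) / 2
  have hshift : ∀ a : ℚ, rescale (c + a) (exp ℚ) = rescale a (exp ℚ) * rescale c (exp ℚ) :=
    fun a => by rw [exp_mul_exp_eq_exp_add, add_comm]
  rw [show ((2 * i - ((d + 1 : ℕ) : ℚ)) / 2) = c + (-1 / 2) by push_cast; ring,
    show ((2 * ((i + 1 : ℕ) : ℚ) - ((d + 1 : ℕ) : ℚ)) / 2) = c + 1 / 2 by push_cast; ring,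
    hshift, hshift, sinhcHalf_add_X_mul_derivative, X_mul_sinhcHalf,
    ← Nat.cast_smul_eq_nsmul ℚ (i + 1), ← Nat.cast_smul_eq_nsmul ℚ (d + 1 - i),
    Nat.cast_sub (by omega)]
  push_cast
  rw [smul_mul_assoc, add_mul, mul_smul_comm, sub_mul]
  module

lemma X_pow_dvd_descentMomentSeries_sub (d : ℕ) :
    X ^ (d + 2) ∣ descentMomentSeries d - ((d + 1).factorial : ℚ) • sinhcHalf ^ (d + 2) := by
  induction d with
  | zero =>
    have h : X ^ 2 ∣ 1 - sinhcHalf :=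
      X_pow_dvd_iff.mpr fun m hm => by interval_cases m <;> simp [sinhcHalf]
    simp only [descentMomentSeries_zero, zero_add, Nat.factorial_one, Nat.cast_one, one_smul]
    rw [show (1 : ℚ⟦X⟧) - sinhcHalf ^ 2 = (1 - sinhcHalf) * (1 + sinhcHalf) by ring]
    exact dvd_mul_of_dvd_left h _
  | succ d ih =>
    obtain ⟨Ψ, hΨ⟩ := ih
    rw [sub_eq_iff_eq_add'] at hΨ
    refine ⟨((d : ℚ) + 2) • (d⁄dX ℚ sinhcHalf * Ψ) - sinhcHalf * d⁄dX ℚ Ψ, ?_⟩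
    rw [descentMomentSeries_succ, hΨ, map_add, Derivation.map_smul, Derivation.leibniz_pow,
      Derivation.leibniz, Derivation.leibniz_pow, derivative_X, Nat.factorial_succ (d + 1)]
    simp only [smul_eq_mul, nsmul_eq_mul]
    simp only [Algebra.smul_def, map_add, map_natCast, map_ofNat]
    push_cast
    ring

lemma coeff_descentMomentSeries (d k : ℕ) :
    coeff k (descentMomentSeries d)
      = (∑ i ∈ range (d + 1), (eulerian (d + 1) i : ℚ) * (2 * i - d) ^ k)
        / (2 ^ k * k.factorial) := by
  simp only [descentMomentSeries, map_sum, coeff_smul, coeff_rescale, coeff_exp, sum_div,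
    Algebra.algebraMap_self, RingHom.id_apply, smul_eq_mul, div_pow]
  refine sum_congr rfl fun i _ => ?_
  field_simp

/-- For `d ≥ k − 1`, the `k`-th central moment (scaled by `2^k`) of the
descent statistic equals `k! · 2^k` times the coefficient of `z^k` in
`((e^{z/2} − e^{−z/2})/z)^{d+2}`. -/
theorem stmt6 (k d : ℕ) (h : k ≤ d + 1) :
    (∑ i ∈ Finset.range (d + 1), (eulerian (d + 1) i : ℚ) * (2 * (i : ℚ) - (d : ℚ)) ^ k)
      = (Nat.factorial (d + 1) : ℚ) * (Nat.factorial k : ℚ) * 2 ^ k *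
        PowerSeries.coeff (R := ℚ) k
          ((PowerSeries.mk fun n =>
              if Even n then (1 : ℚ) / (4 ^ (n / 2) * (Nat.factorial (n + 1) : ℚ)) else 0) ^
            (d + 2)) := by
  have hcoeff := X_pow_dvd_iff.mp (X_pow_dvd_descentMomentSeries_sub d) k (by omega)
  rw [map_sub, sub_eq_zero, coeff_descentMomentSeries, coeff_smul, smul_eq_mul,
    div_eq_iff (by positivity)] at hcoeff
  rw [hcoeff, sinhcHalf]
  ring
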